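/- The following two identities hold in the real numbers: 7·(-3200524333319476 + 9569278607860305·√51)/(319877868986·(626814·√15 + 58969·√85)) = -(1565240 - 472293·√51)/(1253628·√15 - 117938·√85), and -7·(3200524333319476 + 9569278607860305·√51)/(319877868986·(626814·√15 - 58969·√85)) = -(1565240 + 472293·√51)/(1253628·√15 + 117938·√85). Consequently, for the angles of the flexible suspension with hexagonal equator whose cosines these expressions are, one has ∠N p₁ p₂ + ∠S p₁ p₆ = π and ∠S p₁ p₂ + ∠N p₁ p₆ = π. -/
import Mathlib


open Real

/-- The cosines of the planar angles `∠N p₁ p₂` and `∠S p₁ p₆` (resp. `∠S p₁ p₂` and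
`∠N p₁ p₆`) at the equator vertex `p₁` of the flexible suspension with hexagonal equator are
negatives of each other; consequently the corresponding angles (given by `arccos` of these
cosines) sum to `π`: `∠N p₁ p₂ + ∠S p₁ p₆ = π` and `∠S p₁ p₂ + ∠N p₁ p₆ = π`. -/
theorem stmt18
    (c₁ c₂ c₃ c₄ : ℝ)
    (hc₁ : c₁ = 7 * (-3200524333319476 + 9569278607860305 * Real.sqrt 51) /
      (319877868986 * (626814 * Real.sqrt 15 + 58969 * Real.sqrt 85)))
    (hc₂ : c₂ = (1565240 - 472293 * Real.sqrt 51) /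
      (1253628 * Real.sqrt 15 - 117938 * Real.sqrt 85))
    (hc₃ : c₃ = -(7 * (3200524333319476 + 9569278607860305 * Real.sqrt 51)) /
      (319877868986 * (626814 * Real.sqrt 15 - 58969 * Real.sqrt 85)))
    (hc₄ : c₄ = (1565240 + 472293 * Real.sqrt 51) /
      (1253628 * Real.sqrt 15 + 117938 * Real.sqrt 85)) :
    c₁ = -c₂ ∧ c₃ = -c₄ ∧
      Real.arccos c₁ + Real.arccos c₂ = Real.pi ∧
      Real.arccos c₃ + Real.arccos c₄ = Real.pi := by
  have h15lb : (3 : ℝ) < Real.sqrt 15 := by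
    have := Real.lt_sqrt (x := 3) (y := 15) (by norm_num)
    rw [this]; norm_num
  have h85ub : Real.sqrt 85 < 10 := by
    have := Real.sqrt_lt' (x := 85) (y := 10) (by norm_num)
    rw [this]; norm_num
  have h85lb : (0 : ℝ) ≤ Real.sqrt 85 := Real.sqrt_nonneg _
  have h1551 : Real.sqrt 15 * Real.sqrt 51 = 3 * Real.sqrt 85 := by
    rw [← Real.sqrt_mul (by norm_num : (0:ℝ) ≤ 15), show (15:ℝ) * 51 = 3 ^ 2 * 85 by norm_num,
      Real.sqrt_mul (by positivity), Real.sqrt_sq (by norm_num : (0:ℝ) ≤ 3)]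
  have h5185 : Real.sqrt 51 * Real.sqrt 85 = 17 * Real.sqrt 15 := by
    rw [← Real.sqrt_mul (by norm_num : (0:ℝ) ≤ 51), show (51:ℝ) * 85 = 17 ^ 2 * 15 by norm_num,
      Real.sqrt_mul (by positivity), Real.sqrt_sq (by norm_num : (0:ℝ) ≤ 17)]
  have hD1 : (319877868986 : ℝ) * (626814 * Real.sqrt 15 + 58969 * Real.sqrt 85) ≠ 0 := by
    positivity
  have hD2 : (1253628 : ℝ) * Real.sqrt 15 - 117938 * Real.sqrt 85 ≠ 0 := by
    nlinarith [h15lb, h85ub]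
  have hD3 : (319877868986 : ℝ) * (626814 * Real.sqrt 15 - 58969 * Real.sqrt 85) ≠ 0 := by
    have : (626814 : ℝ) * Real.sqrt 15 - 58969 * Real.sqrt 85 > 0 := by
      nlinarith [h15lb, h85ub]
    positivity
  have hD4 : (1253628 : ℝ) * Real.sqrt 15 + 117938 * Real.sqrt 85 ≠ 0 := by positivity
  have h12 : c₁ = -c₂ := by
    rw [hc₁, hc₂, ← neg_div, div_eq_div_iff hD1 hD2]
    linear_combination (-10722391773501059079192 : ℝ) * h1551 +
      (-16808876328990402387792 : ℝ) * h5185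
  have h34 : c₃ = -c₄ := by
    rw [hc₃, hc₄, ← neg_div, div_eq_div_iff hD3 hD4]
    linear_combination (10722391773501059079192 : ℝ) * h1551 +
      (-16808876328990402387792 : ℝ) * h5185
  refine ⟨h12, h34, ?_, ?_⟩
  · rw [h12, Real.arccos_neg]; ring
  · rw [h34, Real.arccos_neg]; ring
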